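/- Fix an integer m ≥ 1 and positive reals σ_1², …, σ_n². Let G^r be any reduced set for (σ_1², …, σ_n², m) with |G^r| ≥ 2m, and let L ⊆ G^r with |L| = 2m be a set of indices attaining the 2m largest values of σ_i² among i ∈ G^r. Then (∑_{i∈L} σ_i²) / (∑_{j∈G^r} σ_j²) ≥ 1/3. -/
import Mathlib


open Finset Real
open scoped Classical

/-- Entropy-like function `Ent(a_S) = -∑_{i∈S} (a_i/A) ln (a_i/A)` with `A = ∑_{j∈S} a_j`. -/
noncomputable def ent {ι : Type*} (S : Finset ι) (a : ι → ℝ) : ℝ :=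
  -∑ i ∈ S, (a i / ∑ j ∈ S, a j) * Real.log (a i / ∑ j ∈ S, a j)

/-- The minimum variance `σ̲² = min_{i∈[n]} σ_i²`. -/
noncomputable def sigMin (n : ℕ) [NeZero n] (σ : Fin n → ℝ) : ℝ :=
  Finset.univ.inf' Finset.univ_nonempty σ

/-- The `j`-th variance group `G_j = {i ∈ [n] : 2^{j-1} ≤ σ_i²/σ̲² < 2^j}` (for `j ≥ 1`). -/
noncomputable def grp (n : ℕ) [NeZero n] (σ : Fin n → ℝ) (j : ℕ) : Finset (Fin n) :=
  Finset.univ.filter fun i =>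
    (2 : ℝ) ^ (j - 1) ≤ σ i / sigMin n σ ∧ σ i / sigMin n σ < 2 ^ j

/-- `Gr` is a reduced set for `(σ², m)`: `Gr = ∪_j G'_j` where `G'_j = G_j` when
`|G_j| ≤ 2m`, and `G'_j` is an arbitrary `2m`-element subset of `G_j` otherwise. -/
def IsReducedSet (n : ℕ) [NeZero n] (m : ℕ) (σ : Fin n → ℝ) (Gr : Finset (Fin n)) : Prop :=
  ∃ G' : ℕ → Finset (Fin n),
    (∀ j : ℕ, 1 ≤ j →
      ((grp n σ j).card ≤ 2 * m → G' j = grp n σ j) ∧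
      (2 * m < (grp n σ j).card → G' j ⊆ grp n σ j ∧ (G' j).card = 2 * m)) ∧
    (Gr : Set (Fin n)) = ⋃ (j : ℕ) (_ : 1 ≤ j), (G' j : Set (Fin n))

lemma sigMin_pos (n : ℕ) [NeZero n] (σ : Fin n → ℝ) (hσ : ∀ i, 0 < σ i) :
    0 < sigMin n σ :=
  (Finset.lt_inf'_iff _).mpr fun i _ => hσ i

lemma sigMin_le (n : ℕ) [NeZero n] (σ : Fin n → ℝ) (i : Fin n) :
    sigMin n σ ≤ σ i :=
  Finset.inf'_le _ (Finset.mem_univ i)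

lemma grp_exists_mem (n : ℕ) [NeZero n] (σ : Fin n → ℝ) (hσ : ∀ i, 0 < σ i) (i : Fin n) :
    ∃ j, 1 ≤ j ∧ i ∈ grp n σ j := by
  have hu := sigMin_pos n σ hσ
  have hr : 1 ≤ σ i / sigMin n σ := (one_le_div hu).mpr (sigMin_le n σ i)
  have hex : ∃ j : ℕ, σ i / sigMin n σ < 2 ^ j := by
    obtain ⟨j, hj⟩ := pow_unbounded_of_one_lt (σ i / sigMin n σ) (by norm_num : (1:ℝ) < 2)
    exact ⟨j, hj⟩
  classical
  set j := Nat.find hex with hjdef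
  have hspec : σ i / sigMin n σ < 2 ^ j := Nat.find_spec hex
  have hj1 : 1 ≤ j := by
    by_contra h
    have : j = 0 := by omega
    rw [this] at hspec
    simp at hspec
    linarith
  have hmin : ¬ σ i / sigMin n σ < 2 ^ (j - 1) := Nat.find_min hex (by omega)
  exact ⟨j, hj1, by simp [grp, not_lt.mp hmin, hspec]⟩

lemma grp_unique (n : ℕ) [NeZero n] (σ : Fin n → ℝ) {i : Fin n} {j k : ℕ}
    (hj : 1 ≤ j) (hk : 1 ≤ k) (hij : i ∈ grp n σ j) (hik : i ∈ grp n σ k) : j = k := by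
  simp only [grp, Finset.mem_filter] at hij hik
  by_contra h
  rcases Nat.lt_or_ge j k with hlt | hge
  · have h1 : (2:ℝ) ^ j ≤ 2 ^ (k - 1) :=
      pow_le_pow_right₀ (by norm_num) (by omega)
    linarith [hij.2.2, hik.2.1]
  · have hlt : k < j := by omega
    have h1 : (2:ℝ) ^ k ≤ 2 ^ (j - 1) :=
      pow_le_pow_right₀ (by norm_num) (by omega)
    linarith [hik.2.2, hij.2.1]

set_option maxHeartbeats 800000 in
/-- **Lemma.** For `m ≥ 1`, a reduced set `G^r` with `|G^r| ≥ 2m`, and `L ⊆ G^r` the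
`2m` indices with the largest variances in `G^r`,
`(∑_{i∈L} σ_i²)/(∑_{j∈G^r} σ_j²) ≥ 1/3`. -/
theorem stmt_10 (n m : ℕ) [NeZero n] (hm : 1 ≤ m)
    (σ : Fin n → ℝ) (hσ : ∀ i, 0 < σ i)
    (Gr : Finset (Fin n)) (hGr : IsReducedSet n m σ Gr) (hGrcard : 2 * m ≤ Gr.card)
    (L : Finset (Fin n)) (hLsub : L ⊆ Gr) (hLcard : L.card = 2 * m)
    (hLtop : ∀ i ∈ L, ∀ j ∈ Gr \ L, σ j ≤ σ i) :
    (∑ i ∈ L, σ i) / (∑ j ∈ Gr, σ j) ≥ 1 / 3 := by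
  classical
  set u := sigMin n σ with hudef
  have hu : 0 < u := sigMin_pos n σ hσ
  have hGrne : Gr.Nonempty := Finset.card_pos.mp (by omega)
  have hsum_pos : 0 < ∑ j ∈ Gr, σ j :=
    Finset.sum_pos (fun i _ => hσ i) hGrne
  rw [ge_iff_le, le_div_iff₀ hsum_pos]
  -- reduce to ∑_C ≤ 2 ∑_L where C = Gr \ L
  have hsplit : (∑ i ∈ Gr \ L, σ i) + ∑ i ∈ L, σ i = ∑ i ∈ Gr, σ i :=
    Finset.sum_sdiff hLsub
  have hLnonneg : 0 ≤ ∑ i ∈ L, σ i :=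
    Finset.sum_nonneg fun i _ => (hσ i).le
  suffices hkey : ∑ i ∈ Gr \ L, σ i ≤ 2 * ∑ i ∈ L, σ i by linarith
  set C := Gr \ L with hCdef
  rcases C.eq_empty_or_nonempty with hC | hC
  · rw [hC]; simpa using hLnonneg
  obtain ⟨i₀, hi₀C, hi₀max⟩ := C.exists_max_image σ hC
  set s := σ i₀ with hsdef
  have hs_pos : 0 < s := hσ i₀
  have hsL : ∀ i ∈ L, s ≤ σ i := fun i hi => hLtop i hi i₀ hi₀C
  obtain ⟨j₀, hj₀1, hij₀⟩ := grp_exists_mem n σ hσ i₀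
  have hij₀' := hij₀
  simp only [grp, Finset.mem_filter] at hij₀'
  have hs_lo : 2 ^ (j₀ - 1) * u ≤ s := by
    have := hij₀'.2.1
    rw [le_div_iff₀ hu] at this
    linarith
  have hs_hi : s < 2 ^ j₀ * u := by
    have := hij₀'.2.2
    rw [div_lt_iff₀ hu] at this
    linarith
  set U : ℝ := 2 ^ j₀ * u with hUdef
  have hU2s : U ≤ 2 * s := by
    have hpow : (2:ℝ) ^ j₀ = 2 ^ (j₀ - 1) * 2 := by
      rw [← pow_succ]
      congr 1
      omega
    rw [hUdef, hpow]
    linarith [hs_lo]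
  have hU_pos : 0 < U := mul_pos (pow_pos (by norm_num) _) hu
  -- reduced set structure
  obtain ⟨G', hG'spec, hGrEq⟩ := hGr
  have hG'sub : ∀ j, 1 ≤ j → G' j ⊆ grp n σ j := by
    intro j hj
    rcases le_or_gt (grp n σ j).card (2 * m) with h | h
    · rw [(hG'spec j hj).1 h]
    · exact ((hG'spec j hj).2 h).1
  have hG'card : ∀ j, 1 ≤ j → (G' j).card ≤ 2 * m := by
    intro j hj
    rcases le_or_gt (grp n σ j).card (2 * m) with h | h
    · rw [(hG'spec j hj).1 h]; exact h
    · exact le_of_eq ((hG'spec j hj).2 h).2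
  have hcap : ∀ j, 1 ≤ j → Gr ∩ grp n σ j ⊆ G' j := by
    intro j hj x hx
    rw [Finset.mem_inter] at hx
    have hxset : (x : Fin n) ∈ (Gr : Set (Fin n)) := hx.1
    rw [hGrEq] at hxset
    simp only [Set.mem_iUnion] at hxset
    obtain ⟨j', hj', hxj'⟩ := hxset
    have hxgrp' : x ∈ grp n σ j' := hG'sub j' hj' hxj'
    have : j' = j := grp_unique n σ hj' hj hxgrp' hx.2
    rwa [← this]
  have hcapcard : ∀ j, 1 ≤ j → (Gr ∩ grp n σ j).card ≤ 2 * m :=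
    fun j hj => le_trans (Finset.card_le_card (hcap j hj)) (hG'card j hj)
  -- every element of Gr\L has σ ≤ s and group index ≤ j₀
  have hC_le_s : ∀ x ∈ C, σ x ≤ s := hi₀max
  -- split L
  set Llo := L ∩ grp n σ j₀ with hLlodef
  set Lhi := L \ grp n σ j₀ with hLhidef
  set b := Llo.card with hbdef
  have hb_le : b ≤ 2 * m := by
    rw [hbdef, ← hLcard]
    exact Finset.card_le_card (Finset.inter_subset_left)
  have hLhicard : Lhi.card = 2 * m - b := by
    have h := Finset.card_inter_add_card_sdiff L (grp n σ j₀)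
    rw [← hLlodef, ← hLhidef] at h
    omega
  -- lower bound for sum over L
  have hLlo_sum : (b : ℝ) * s ≤ ∑ i ∈ Llo, σ i := by
    calc (b : ℝ) * s = ∑ _i ∈ Llo, s := by rw [Finset.sum_const, nsmul_eq_mul]
    _ ≤ ∑ i ∈ Llo, σ i :=
      Finset.sum_le_sum fun i hi => hsL i (Finset.mem_inter.mp hi).1
  have hLhi_ge : ∀ i ∈ Lhi, U ≤ σ i := by
    intro i hi
    rw [Finset.mem_sdiff] at hi
    obtain ⟨ji, hji1, hiji⟩ := grp_exists_mem n σ hσ i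
    have hne : ji ≠ j₀ := fun h => hi.2 (h ▸ hiji)
    have hiji' := hiji
    simp only [grp, Finset.mem_filter] at hiji'
    have hgt : j₀ < ji := by
      by_contra h
      have hlt : ji < j₀ := by omega
      have h1 : (2:ℝ) ^ ji ≤ 2 ^ (j₀ - 1) :=
        pow_le_pow_right₀ (by norm_num) (by omega)
      have h2 : σ i / u < 2 ^ ji := hiji'.2.2
      have h3 : s ≤ σ i := hsL i hi.1
      have h4 : 2 ^ (j₀ - 1) * u ≤ s := hs_lo
      rw [div_lt_iff₀ hu] at h2
      have h5 := mul_le_mul_of_nonneg_right h1 hu.le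
      linarith
    have h1 : (2:ℝ) ^ j₀ ≤ 2 ^ (ji - 1) :=
      pow_le_pow_right₀ (by norm_num) (by omega)
    have h2 : (2:ℝ) ^ (ji - 1) ≤ σ i / u := hiji'.2.1
    rw [le_div_iff₀ hu] at h2
    rw [hUdef]
    have h3 := mul_le_mul_of_nonneg_right h1 hu.le
    linarith
  have hLhi_sum : ((2 * m - b : ℕ) : ℝ) * U ≤ ∑ i ∈ Lhi, σ i := by
    calc ((2 * m - b : ℕ) : ℝ) * U = ∑ _i ∈ Lhi, U := by
          rw [Finset.sum_const, nsmul_eq_mul, hLhicard]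
    _ ≤ ∑ i ∈ Lhi, σ i := Finset.sum_le_sum hLhi_ge
  have hLsum : (b : ℝ) * s + ((2 * m - b : ℕ) : ℝ) * U ≤ ∑ i ∈ L, σ i := by
    have := Finset.sum_inter_add_sum_sdiff L (grp n σ j₀) σ
    rw [← this]
    exact add_le_add hLlo_sum hLhi_sum
  -- upper bound for sum over C ∩ grp j₀
  have hCj₀card : (C ∩ grp n σ j₀).card ≤ 2 * m - b := by
    have hdisj : Disjoint (C ∩ grp n σ j₀) Llo := by
      apply Finset.disjoint_left.mpr
      intro x hx hxL
      have hxC : x ∈ C := (Finset.mem_inter.mp hx).1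
      have hxL' : x ∈ L := (Finset.mem_inter.mp hxL).1
      exact (Finset.mem_sdiff.mp hxC).2 hxL'
    have hsub : (C ∩ grp n σ j₀) ∪ Llo ⊆ Gr ∩ grp n σ j₀ := by
      intro x hx
      rcases Finset.mem_union.mp hx with h | h
      · rw [Finset.mem_inter] at h ⊢
        exact ⟨(Finset.mem_sdiff.mp h.1).1, h.2⟩
      · rw [Finset.mem_inter] at h ⊢
        exact ⟨hLsub h.1, h.2⟩
    have := Finset.card_le_card hsub
    rw [Finset.card_union_of_disjoint hdisj] at this
    have := hcapcard j₀ hj₀1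
    omega
  have hCj₀sum : ∑ i ∈ C ∩ grp n σ j₀, σ i ≤ ((2 * m - b : ℕ) : ℝ) * s := by
    calc ∑ i ∈ C ∩ grp n σ j₀, σ i ≤ ∑ _i ∈ C ∩ grp n σ j₀, s :=
          Finset.sum_le_sum fun i hi => hC_le_s i (Finset.mem_inter.mp hi).1
    _ = ((C ∩ grp n σ j₀).card : ℝ) * s := by rw [Finset.sum_const, nsmul_eq_mul]
    _ ≤ ((2 * m - b : ℕ) : ℝ) * s := by
          apply mul_le_mul_of_nonneg_right _ hs_pos.le
          exact_mod_cast hCj₀card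
  -- upper bound for sum over C \ grp j₀: all in groups < j₀
  set C' := C \ grp n σ j₀ with hC'def
  have hC'eq : C' = (Finset.range j₀).biUnion (fun j => C' ∩ grp n σ j) := by
    apply Finset.Subset.antisymm
    · intro x hx
      obtain ⟨jx, hjx1, hxjx⟩ := grp_exists_mem n σ hσ x
      have hxC : x ∈ C := (Finset.mem_sdiff.mp hx).1
      have hxne : x ∉ grp n σ j₀ := (Finset.mem_sdiff.mp hx).2
      have hne : jx ≠ j₀ := fun h => hxne (h ▸ hxjx)
      have hxjx' := hxjx
      simp only [grp, Finset.mem_filter] at hxjx'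
      have hlt : jx < j₀ := by
        by_contra h
        have : j₀ < jx := by omega
        have h1 : (2:ℝ) ^ j₀ ≤ 2 ^ (jx - 1) :=
          pow_le_pow_right₀ (by norm_num) (by omega)
        have h2 : (2:ℝ) ^ (jx - 1) ≤ σ x / u := hxjx'.2.1
        rw [le_div_iff₀ hu] at h2
        have h3 : σ x ≤ s := hC_le_s x hxC
        nlinarith [hs_hi]
      exact Finset.mem_biUnion.mpr ⟨jx, Finset.mem_range.mpr hlt,
        Finset.mem_inter.mpr ⟨hx, hxjx⟩⟩
    · intro x hx
      obtain ⟨j, _, hxj⟩ := Finset.mem_biUnion.mp hx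
      exact (Finset.mem_inter.mp hxj).1
  have hgrp0 : grp n σ 0 = ∅ := by
    ext i
    simp only [grp, Finset.mem_filter, Finset.mem_univ, true_and, Finset.notMem_empty,
      iff_false, not_and, not_lt]
    intro h
    simpa using h
  have hC'sum : ∑ i ∈ C', σ i ≤ ((2 * m : ℕ) : ℝ) * U := by
    have hdisj : ∀ x ∈ Finset.range j₀, ∀ y ∈ Finset.range j₀, x ≠ y →
        Disjoint (C' ∩ grp n σ x) (C' ∩ grp n σ y) := by
      intro x _ y _ hxy
      apply Finset.disjoint_left.mpr
      intro a hax hay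
      rcases Nat.eq_zero_or_pos x with hx0 | hx1
      · rw [hx0, hgrp0] at hax; simp at hax
      rcases Nat.eq_zero_or_pos y with hy0 | hy1
      · rw [hy0, hgrp0] at hay; simp at hay
      exact hxy (grp_unique n σ hx1 hy1 (Finset.mem_inter.mp hax).2
        (Finset.mem_inter.mp hay).2)
    have hsumeq : ∑ i ∈ C', σ i = ∑ j ∈ Finset.range j₀, ∑ i ∈ C' ∩ grp n σ j, σ i := by
      conv_lhs => rw [hC'eq]
      exact Finset.sum_biUnion hdisj
    rw [hsumeq]
    have hper : ∀ j ∈ Finset.range j₀,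
        ∑ i ∈ C' ∩ grp n σ j, σ i ≤ ((2 * m : ℕ) : ℝ) * (2 ^ j * u) := by
      intro j hj
      rcases Nat.eq_zero_or_pos j with hj0 | hj1
      · rw [hj0, hgrp0, Finset.inter_empty, Finset.sum_empty]
        exact mul_nonneg (Nat.cast_nonneg _) (mul_nonneg (by norm_num) hu.le)
      have hcard : (C' ∩ grp n σ j).card ≤ 2 * m := by
        refine le_trans (Finset.card_le_card ?_) (hcapcard j hj1)
        intro x hx
        rw [Finset.mem_inter] at hx ⊢
        exact ⟨(Finset.mem_sdiff.mp (Finset.mem_sdiff.mp hx.1).1).1, hx.2⟩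
      calc ∑ i ∈ C' ∩ grp n σ j, σ i ≤ ∑ _i ∈ C' ∩ grp n σ j, 2 ^ j * u := by
            apply Finset.sum_le_sum
            intro i hi
            have := (Finset.mem_filter.mp (Finset.mem_inter.mp hi).2).2.2
            rw [div_lt_iff₀ hu] at this
            linarith
      _ = ((C' ∩ grp n σ j).card : ℝ) * (2 ^ j * u) := by
            rw [Finset.sum_const, nsmul_eq_mul]
      _ ≤ ((2 * m : ℕ) : ℝ) * (2 ^ j * u) := by
            apply mul_le_mul_of_nonneg_right _
              (mul_nonneg (by positivity) hu.le)
            exact_mod_cast hcard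
    calc ∑ j ∈ Finset.range j₀, ∑ i ∈ C' ∩ grp n σ j, σ i
        ≤ ∑ j ∈ Finset.range j₀, ((2 * m : ℕ) : ℝ) * (2 ^ j * u) :=
          Finset.sum_le_sum hper
      _ = ((2 * m : ℕ) : ℝ) * u * ∑ j ∈ Finset.range j₀, (2:ℝ) ^ j := by
          rw [Finset.mul_sum]
          apply Finset.sum_congr rfl
          intro j _
          ring
      _ ≤ ((2 * m : ℕ) : ℝ) * U := by
          rw [hUdef]
          have hgeo : ∑ j ∈ Finset.range j₀, (2:ℝ) ^ j = 2 ^ j₀ - 1 := by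
            rw [geom_sum_eq (by norm_num)]
            norm_num
          rw [hgeo]
          have h0 : (0:ℝ) ≤ ((2 * m : ℕ) : ℝ) * u := mul_nonneg (Nat.cast_nonneg _) hu.le
          have h2 : ((2 * m : ℕ) : ℝ) * u * ((2:ℝ) ^ j₀ - 1)
              = ((2 * m : ℕ) : ℝ) * ((2:ℝ) ^ j₀ * u) - ((2 * m : ℕ) : ℝ) * u := by ring
          rw [h2]
          linarith
  -- combine
  have hCsum : ∑ i ∈ C, σ i ≤ ((2 * m - b : ℕ) : ℝ) * s + ((2 * m : ℕ) : ℝ) * U := by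
    have := Finset.sum_inter_add_sum_sdiff C (grp n σ j₀) σ
    rw [← this]
    exact add_le_add hCj₀sum hC'sum
  -- final algebra
  have hbcast : ((2 * m - b : ℕ) : ℝ) = ((2 * m : ℕ) : ℝ) - (b : ℝ) := by
    have : b ≤ 2 * m := hb_le
    push_cast [Nat.cast_sub this]
    ring
  have hB0 : (0:ℝ) ≤ (b:ℝ) := Nat.cast_nonneg b
  have hBM : (b:ℝ) ≤ ((2 * m : ℕ):ℝ) := Nat.cast_le.mpr hb_le
  have hsU : s ≤ U := hs_hi.le
  have k1 : (0:ℝ) ≤ (b:ℝ) * (2 * s - U) := mul_nonneg hB0 (by linarith)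
  have k2 : (0:ℝ) ≤ (((2 * m : ℕ):ℝ) - (b:ℝ)) * (U - s) :=
    mul_nonneg (by linarith) (by linarith)
  rw [hbcast] at hLsum hCsum
  nlinarith [k1, k2, hLsum, hCsum]
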